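/- Let T ∈ GL(n+1,ℝ) and a ∈ ℝ^{n+1} be nonzero with ‖T⁻¹(a)‖ < 1. Then the map T̄ₐ : Sⁿ → Sⁿ defined by T̄ₐ(x) = (a+T(x))/‖a+T(x)‖ is injective. -/

import Mathlib

/-- The "affine" map `x ↦ (a + T(x))/‖a + T(x)‖` induced on the unit sphere. -/
noncomputable def affAct {m : ℕ} (A : Matrix (Fin m) (Fin m) ℝ)
    (a x : EuclideanSpace ℝ (Fin m)) : EuclideanSpace ℝ (Fin m) :=
  ‖a + Matrix.toEuclideanLin A x‖⁻¹ • (a + Matrix.toEuclideanLin A x)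

lemma aux_key {m : ℕ} (x y b : EuclideanSpace ℝ (Fin m)) (c : ℝ)
    (hx : ‖x‖ = 1) (hy : ‖y‖ = 1) (hb : ‖b‖ < 1) (hc : 1 ≤ c)
    (h : y = c • x + (c - 1) • b) : y = x := by
  rcases eq_or_lt_of_le hc with hc1 | hc1
  · rw [← hc1] at h; simpa using h
  · exfalso
    have hxc : c • x = y - (c - 1) • b := by rw [h]; module
    have h1 : c = ‖c • x‖ := by
      rw [norm_smul, hx, Real.norm_eq_abs, abs_of_pos (by linarith), mul_one]
    have h2 : ‖y - (c - 1) • b‖ ≤ 1 + (c - 1) * ‖b‖ := by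
      calc ‖y - (c - 1) • b‖ ≤ ‖y‖ + ‖(c - 1) • b‖ := norm_sub_le _ _
        _ = 1 + (c - 1) * ‖b‖ := by
            rw [hy, norm_smul, Real.norm_eq_abs, abs_of_pos (by linarith)]
    rw [hxc] at h1
    nlinarith

theorem stmt9 (n : ℕ) (T : GL (Fin (n + 1)) ℝ) (a : EuclideanSpace ℝ (Fin (n + 1)))
    (ha : a ≠ 0)
    (hlt : ‖Matrix.toEuclideanLin ((T⁻¹ : GL (Fin (n + 1)) ℝ) : Matrix (Fin (n + 1)) (Fin (n + 1)) ℝ) a‖ < 1) :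
    ∀ x y : EuclideanSpace ℝ (Fin (n + 1)), ‖x‖ = 1 → ‖y‖ = 1 →
      affAct (T : Matrix (Fin (n + 1)) (Fin (n + 1)) ℝ) a x =
        affAct (T : Matrix (Fin (n + 1)) (Fin (n + 1)) ℝ) a y → x = y := by
  intro x y hx hy heq
  set L := Matrix.toEuclideanLin ((T : Matrix (Fin (n + 1)) (Fin (n + 1)) ℝ)) with hL
  set S := Matrix.toEuclideanLin ((T⁻¹ : GL (Fin (n + 1)) ℝ) : Matrix (Fin (n + 1)) (Fin (n + 1)) ℝ) with hS
  have hSL : ∀ v, S (L v) = v := by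
    intro v
    simp only [hS, hL, Matrix.toEuclideanLin_apply, Equiv.apply_symm_apply,
      Matrix.mulVec_mulVec]
    rw [show ((T⁻¹ : GL (Fin (n + 1)) ℝ) : Matrix (Fin (n + 1)) (Fin (n + 1)) ℝ) *
        (T : Matrix (Fin (n + 1)) (Fin (n + 1)) ℝ) = 1 from T.inv_mul]
    simp
  have hne : ∀ v : EuclideanSpace ℝ (Fin (n + 1)), ‖v‖ = 1 → a + L v ≠ 0 := by
    intro v hv hzero
    have hSa : S a = -v := by
      have h0 := congrArg S hzero
      rw [map_add, hSL, map_zero] at h0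
      linear_combination (norm := module) h0
    rw [hSa] at hlt
    rw [norm_neg, hv] at hlt
    linarith
  have hpx := hne x hx
  have hqy := hne y hy
  have hpxn : (0:ℝ) < ‖a + L x‖ := norm_pos_iff.mpr hpx
  have hqyn : (0:ℝ) < ‖a + L y‖ := norm_pos_iff.mpr hqy
  unfold affAct at heq
  rw [← hL] at heq
  set c : ℝ := ‖a + L y‖ / ‖a + L x‖ with hc
  have hcpos : 0 < c := div_pos hqyn hpxn
  have hq : a + L y = c • (a + L x) := by
    have := congrArg (fun z => ‖a + L y‖ • z) heq
    rw [smul_smul, smul_smul, mul_inv_cancel₀ (ne_of_gt hqyn), one_smul] at this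
    rw [← this, hc, div_eq_mul_inv, mul_comm]
  have hy' : y = c • x + (c - 1) • S a := by
    have hLy : L y = c • L x + (c - 1) • a := by
      have := hq
      rw [smul_add] at this
      linear_combination (norm := module) this
    have := congrArg S hLy
    rw [map_add, map_smul, map_smul, hSL, hSL] at this
    exact this
  rcases le_or_gt 1 c with h1 | h1
  · exact (aux_key x y (S a) c hx hy hlt h1 hy').symm
  · have hcne : c ≠ 0 := ne_of_gt hcpos
    have hx' : x = c⁻¹ • y + (c⁻¹ - 1) • S a := by
      have := congrArg (fun z => c⁻¹ • z) hy'
      simp only [smul_add, smul_smul, inv_mul_cancel₀ hcne, one_smul] at this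
      rw [this]; field_simp; module
    have h1' : 1 ≤ c⁻¹ := by
      rw [le_inv_comm₀ one_pos hcpos]; simpa using le_of_lt h1
    exact aux_key y x (S a) c⁻¹ hy hx hlt h1' hx'
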